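/- arXiv:2503.23577 — 2 statements merged into one kernel-verified Lean document; each statement's English description precedes it below -/
import Mathlib

section
/- Let d₁, …, d_K ∈ ℝ³ be unit vectors such that some pair d_i, d_j is linearly independent, let c₁, …, c_K ∈ ℝ³, let L_k = {c_k + λ d_k : λ ∈ ℝ}, and let f(c) = Σ_{k=1}^K dist(c, L_k)². Then f attains a unique global minimum on ℝ³, at the point c_q = (Σ_{k=1}^K (I − d_k d_kᵀ))⁻¹ (Σ_{k=1}^K (I − d_k d_kᵀ) c_k). -/
open scoped InnerProductSpace
open Matrix

/-- Reinterpret a plain vector in `Fin 3 → ℝ` as an element of Euclidean 3-space. -/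
noncomputable def toE3 (x : Fin 3 → ℝ) : EuclideanSpace ℝ (Fin 3) := WithLp.toLp 2 x

local notation "E" => EuclideanSpace ℝ (Fin 3)

lemma distsq (c d x : E) (hd : ‖d‖ = 1) (lam : ℝ) :
    dist x (c + lam • d) ^ 2
      = ‖x - c‖ ^ 2 - ⟪x - c, d⟫_ℝ ^ 2 + (lam - ⟪x - c, d⟫_ℝ) ^ 2 := by
  have h1 : x - (c + lam • d) = (x - c) - lam • d := by abel
  rw [dist_eq_norm, h1, norm_sub_sq_real, real_inner_smul_right, norm_smul, hd,
    Real.norm_eq_abs]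
  have : (|lam| * 1) ^ 2 = lam ^ 2 := by rw [mul_one, sq_abs]
  rw [this]; ring

lemma inner_dot (u w : E) : ⟪u, w⟫_ℝ = u ⬝ᵥ w := by
  simp [PiLp.inner_apply, RCLike.inner_apply, dotProduct, mul_comm]

lemma vvm (d v : Fin 3 → ℝ) : (Matrix.vecMulVec d d).mulVec v = (d ⬝ᵥ v) • d := by
  ext i; simp [Matrix.mulVec, Matrix.vecMulVec_apply, dotProduct, Finset.mul_sum,
    Finset.sum_mul, mul_comm, mul_assoc, mul_left_comm]

lemma infDistSq (c d x : E) (hd : ‖d‖ = 1) :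
    Metric.infDist x {y : E | ∃ lam : ℝ, y = c + lam • d} ^ 2
      = ‖x - c‖ ^ 2 - ⟪x - c, d⟫_ℝ ^ 2 := by
  set S : Set E := {y : E | ∃ lam : ℝ, y = c + lam • d}
  have hne : S.Nonempty := ⟨c + (0:ℝ) • d, 0, rfl⟩
  set p : E := c + ⟪x - c, d⟫_ℝ • d with hp
  have hpS : p ∈ S := ⟨_, rfl⟩
  have hdp : dist x p ^ 2 = ‖x - c‖ ^ 2 - ⟪x - c, d⟫_ℝ ^ 2 := by
    rw [hp, distsq c d x hd]; ring
  have heq : Metric.infDist x S = dist x p := by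
    refine le_antisymm (Metric.infDist_le_dist_of_mem hpS) ?_
    by_contra hlt
    push_neg at hlt
    obtain ⟨y, hyS, hy⟩ := (Metric.infDist_lt_iff hne).1 hlt
    obtain ⟨lam, rfl⟩ := hyS
    have h1 : dist x p ^ 2 ≤ dist x (c + lam • d) ^ 2 := by
      rw [hdp, distsq c d x hd]; nlinarith [sq_nonneg (lam - ⟪x - c, d⟫_ℝ)]
    nlinarith [dist_nonneg (x := x) (y := p), dist_nonneg (x := x) (y := c + lam • d)]
  rw [heq, hdp]

lemma sum_mulVec' {K : ℕ} (M : Fin K → Matrix (Fin 3) (Fin 3) ℝ) (v : Fin 3 → ℝ) :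
    (∑ k, M k) *ᵥ v = ∑ k, (M k) *ᵥ v := by
  ext i
  simp only [Matrix.mulVec, dotProduct, Finset.sum_apply, Matrix.sum_apply,
    Finset.sum_mul]
  rw [Finset.sum_comm]

lemma dot_sum' {K : ℕ} (v : Fin 3 → ℝ) (w : Fin K → Fin 3 → ℝ) :
    v ⬝ᵥ (∑ k, w k) = ∑ k, v ⬝ᵥ w k := by
  simp only [dotProduct, Finset.sum_apply, Finset.mul_sum]
  rw [Finset.sum_comm]

/-- If some pair of the unit directions `d_i, d_j` is linearly
independent, then `f(c) = Σ_k dist(c, L_k)²` attains a unique global minimum,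
at `c_q = (Σ_k (I − d_k d_kᵀ))⁻¹ (Σ_k (I − d_k d_kᵀ) c_k)`. -/
theorem unique_global_minimizer_closed_form
    (K : ℕ) (d c : Fin K → EuclideanSpace ℝ (Fin 3))
    (hd : ∀ k, ‖d k‖ = 1)
    (hind : ∃ i j : Fin K, LinearIndependent ℝ ![d i, d j])
    (L : Fin K → Set (EuclideanSpace ℝ (Fin 3)))
    (hL : ∀ k, L k = {x | ∃ lam : ℝ, x = c k + lam • d k})
    (f : EuclideanSpace ℝ (Fin 3) → ℝ)
    (hf : f = fun x => ∑ k, Metric.infDist x (L k) ^ 2)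
    (A : Matrix (Fin 3) (Fin 3) ℝ)
    (hA : A = ∑ k, (1 - Matrix.vecMulVec (d k) (d k)))
    (b : Fin 3 → ℝ)
    (hb : b = ∑ k, (1 - Matrix.vecMulVec (d k) (d k)).mulVec (c k))
    (cq : EuclideanSpace ℝ (Fin 3))
    (hcq : cq = toE3 (A⁻¹.mulVec b)) :
    (∀ x, f cq ≤ f x) ∧
    (∀ x, (∀ y, f x ≤ f y) → x = cq) := by
  obtain ⟨i, j, hij⟩ := hind
  -- the quadratic form
  set q : E → ℝ := fun v => ∑ k, (‖v‖ ^ 2 - ⟪v, d k⟫_ℝ ^ 2) with hqdef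
  have hdk2 : ∀ k, ⟪d k, d k⟫_ℝ = 1 := by
    intro k; rw [real_inner_self_eq_norm_sq, hd k]; norm_num
  have hqterm : ∀ (v : E) k, 0 ≤ ‖v‖ ^ 2 - ⟪v, d k⟫_ℝ ^ 2 := by
    intro v k
    have h1 := real_inner_mul_inner_self_le v (d k)
    have h2 := hdk2 k
    have h3 : ⟪v, v⟫_ℝ = ‖v‖ ^ 2 := real_inner_self_eq_norm_sq v
    nlinarith
  have hq0 : ∀ v : E, 0 ≤ q v := fun v =>
    Finset.sum_nonneg fun k _ => hqterm v k
  have hqzero : ∀ v : E, q v = 0 → v = 0 := by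
    intro v hv
    by_contra hv0
    have hall : ∀ k ∈ Finset.univ, (‖v‖ ^ 2 - ⟪v, d k⟫_ℝ ^ 2) = 0 :=
      (Finset.sum_eq_zero_iff_of_nonneg fun k _ => hqterm v k).1 hv
    have hpar : ∀ k, ‖v‖ ^ 2 = ⟪v, d k⟫_ℝ ^ 2 → v = ⟪v, d k⟫_ℝ • d k := by
      intro k hk
      have : ‖v - ⟪v, d k⟫_ℝ • d k‖ ^ 2 = 0 := by
        rw [norm_sub_sq_real, real_inner_smul_right, norm_smul, Real.norm_eq_abs, hd k]
        have : (|⟪v, d k⟫_ℝ| * 1) ^ 2 = ⟪v, d k⟫_ℝ ^ 2 := by rw [mul_one, sq_abs]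
        rw [this]; nlinarith
      have := pow_eq_zero_iff (n := 2) (by norm_num) |>.1 this
      have := norm_eq_zero.1 this
      exact sub_eq_zero.1 this
    have hvi : v = ⟪v, d i⟫_ℝ • d i := hpar i (by linarith [hall i (Finset.mem_univ i)])
    have hvj : v = ⟪v, d j⟫_ℝ • d j := hpar j (by linarith [hall j (Finset.mem_univ j)])
    have hcomb : ⟪v, d i⟫_ℝ • d i + (-⟪v, d j⟫_ℝ) • d j = 0 := by
      rw [neg_smul, ← hvi, ← hvj]; abel
    have hzero := (LinearIndependent.pair_iff.1 hij _ _ hcomb).1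
    apply hv0
    rw [hvi, hzero, zero_smul]
  -- matrix facts
  have hqdot : ∀ v : E, (v : Fin 3 → ℝ) ⬝ᵥ (A *ᵥ v) = q v := by
    intro v
    rw [hA, sum_mulVec', dot_sum']
    refine Finset.sum_congr rfl fun k _ => ?_
    rw [Matrix.sub_mulVec, Matrix.one_mulVec, vvm, dotProduct_sub, dotProduct_smul,
      smul_eq_mul, ← inner_dot v v, real_inner_self_eq_norm_sq, ← inner_dot (d k) v,
      ← inner_dot v (d k), real_inner_comm (d k) v]
    ring
  have hdet : A.det ≠ 0 := by
    intro h0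
    obtain ⟨v, hv0, hv⟩ := Matrix.exists_mulVec_eq_zero_iff.2 h0
    apply hv0
    have hq : q (toE3 v) = 0 := by
      rw [← hqdot (toE3 v)]
      have hv' : (toE3 v).ofLp = v := by simp [toE3]
      rw [hv', hv, dotProduct_zero]
    have := hqzero _ hq
    simpa [toE3] using congrArg WithLp.ofLp this
  have hAcq : A *ᵥ (cq : Fin 3 → ℝ) = b := by
    rw [hcq]
    rw [show (toE3 (A⁻¹ *ᵥ b)).ofLp = A⁻¹ *ᵥ b by simp [toE3]]
    rw [Matrix.mulVec_mulVec, Matrix.mul_nonsing_inv _ (isUnit_iff_ne_zero.2 hdet),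
      Matrix.one_mulVec]
  -- stationarity
  have hstat : (∑ k, ((cq - c k) - ⟪cq - c k, d k⟫_ℝ • d k)) = (0 : E) := by
    apply WithLp.ofLp_injective
    rw [WithLp.ofLp_sum, WithLp.ofLp_zero]
    have h2 : ∀ k, WithLp.ofLp ((cq - c k) - ⟪cq - c k, d k⟫_ℝ • d k : E)
        = (1 - Matrix.vecMulVec (d k) (d k)) *ᵥ (cq - c k) := by
      intro k
      rw [WithLp.ofLp_sub, WithLp.ofLp_smul, Matrix.sub_mulVec, Matrix.one_mulVec, vvm, inner_dot,
        dotProduct_comm]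
    calc (∑ k, WithLp.ofLp ((cq - c k) - ⟪cq - c k, d k⟫_ℝ • d k : E))
        = ∑ k, (1 - Matrix.vecMulVec (d k) (d k)) *ᵥ (cq - c k) :=
          Finset.sum_congr rfl fun k _ => h2 k
      _ = ∑ k, ((1 - Matrix.vecMulVec (d k) (d k)) *ᵥ cq
            - (1 - Matrix.vecMulVec (d k) (d k)) *ᵥ (c k)) :=
          Finset.sum_congr rfl fun k _ => by rw [WithLp.ofLp_sub, Matrix.mulVec_sub]
      _ = (∑ k, (1 - Matrix.vecMulVec (d k) (d k)) *ᵥ cq)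
            - ∑ k, (1 - Matrix.vecMulVec (d k) (d k)) *ᵥ (c k) :=
          Finset.sum_sub_distrib _ _
      _ = A *ᵥ cq - b := by rw [← hb, ← sum_mulVec', ← hA]
      _ = 0 := by rw [hAcq, sub_self]
  -- per-term expansion
  have hterm : ∀ (k : Fin K) (x : E),
      ‖x - c k‖ ^ 2 - ⟪x - c k, d k⟫_ℝ ^ 2
        = (‖cq - c k‖ ^ 2 - ⟪cq - c k, d k⟫_ℝ ^ 2)
          + (‖x - cq‖ ^ 2 - ⟪x - cq, d k⟫_ℝ ^ 2)
          + 2 * ⟪x - cq, (cq - c k) - ⟪cq - c k, d k⟫_ℝ • d k⟫_ℝ := by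
    intro k x
    have hx : x - c k = (x - cq) + (cq - c k) := by abel
    rw [hx, norm_add_sq_real]
    simp only [inner_add_left, inner_sub_right, real_inner_smul_right]
    ring
  -- global expansion
  have hfq : ∀ x, f x = f cq + q (x - cq) := by
    intro x
    have hfx : ∀ y : E, f y = ∑ k, (‖y - c k‖ ^ 2 - ⟪y - c k, d k⟫_ℝ ^ 2) := by
      intro y
      rw [hf]
      exact Finset.sum_congr rfl fun k _ => by rw [hL k, infDistSq _ _ _ (hd k)]
    rw [hfx x, hfx cq, hqdef]
    have : ∑ k, (‖x - c k‖ ^ 2 - ⟪x - c k, d k⟫_ℝ ^ 2)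
        = ∑ k, ((‖cq - c k‖ ^ 2 - ⟪cq - c k, d k⟫_ℝ ^ 2)
            + (‖x - cq‖ ^ 2 - ⟪x - cq, d k⟫_ℝ ^ 2)
            + 2 * ⟪x - cq, (cq - c k) - ⟪cq - c k, d k⟫_ℝ • d k⟫_ℝ) :=
      Finset.sum_congr rfl fun k _ => hterm k x
    rw [this]
    rw [Finset.sum_add_distrib, Finset.sum_add_distrib, ← Finset.mul_sum,
      ← inner_sum, hstat, inner_zero_right]
    ring
  have hmin : ∀ x, f cq ≤ f x := by
    intro x
    rw [hfq x]
    linarith [hq0 (x - cq)]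
  refine ⟨hmin, fun x hx => ?_⟩
  have h1 : f x = f cq := le_antisymm (hx cq) (hmin x)
  have h2 : q (x - cq) = 0 := by have := hfq x; linarith
  have h3 := hqzero _ h2
  exact sub_eq_zero.1 h3
end

section
/- Let L₁ = {a₁ + λ d₁ : λ ∈ ℝ} and L₂ = {a₂ + λ d₂ : λ ∈ ℝ} be lines in ℝ³ whose unit directions d₁ and d₂ are linearly independent, and let (p₁, p₂) ∈ L₁ × L₂ be the unique pair of points minimizing ‖p₁ − p₂‖. Then the unique global minimizer of f(c) = dist(c, L₁)² + dist(c, L₂)² over ℝ³ is the midpoint c = (p₁ + p₂)/2 of the shortest segment connecting the two lines. -/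
open scoped InnerProductSpace

variable {E : Type*} [NormedAddCommGroup E] [InnerProductSpace ℝ E]

lemma aux_norm_sub_smul_sq (x d : E) (hd : ‖d‖ = 1) (lam : ℝ) :
    ‖x - lam • d‖ ^ 2 = ‖x‖ ^ 2 - 2 * lam * ⟪x, d⟫_ℝ + lam ^ 2 := by
  rw [← real_inner_self_eq_norm_sq]
  simp only [inner_sub_left, inner_sub_right, real_inner_smul_left, real_inner_smul_right,
    real_inner_self_eq_norm_sq, real_inner_comm x d, hd, norm_smul, mul_pow, Real.norm_eq_abs,
    sq_abs, one_pow, mul_one]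
  ring

lemma aux_infDist_line_sq (p d : E) (hd : ‖d‖ = 1) (x : E) :
    Metric.infDist x {y | ∃ lam : ℝ, y = p + lam • d} ^ 2
      = ‖x - p‖ ^ 2 - ⟪x - p, d⟫_ℝ ^ 2 := by
  set S : Set E := {y | ∃ lam : ℝ, y = p + lam • d} with hS
  set t : ℝ := ⟪x - p, d⟫_ℝ with ht
  have key : ∀ lam : ℝ, ‖x - (p + lam • d)‖ ^ 2
      = (‖x - p‖ ^ 2 - t ^ 2) + (lam - t) ^ 2 := by
    intro lam
    have h : x - (p + lam • d) = (x - p) - lam • d := by abel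
    rw [h, aux_norm_sub_smul_sq (x - p) d hd lam]
    ring
  have hq : p + t • d ∈ S := ⟨t, rfl⟩
  have h1 : Metric.infDist x S ≤ ‖x - (p + t • d)‖ := by
    simpa [dist_eq_norm] using Metric.infDist_le_dist_of_mem hq
  have h2 : ‖x - (p + t • d)‖ ≤ Metric.infDist x S := by
    by_contra hlt
    push_neg at hlt
    obtain ⟨y, hy, hdy⟩ := (Metric.infDist_lt_iff ⟨_, hq⟩).1 hlt
    obtain ⟨lam, rfl⟩ := hy
    rw [dist_eq_norm] at hdy
    have e1 := key lam
    have e2 := key t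
    nlinarith [norm_nonneg (x - (p + lam • d)), norm_nonneg (x - (p + t • d)), sq_nonneg (lam - t)]
  have : Metric.infDist x S = ‖x - (p + t • d)‖ := le_antisymm h1 h2
  rw [this, key t]
  ring

lemma aux_parallelogram (v w : E) :
    ‖v - (2:ℝ)⁻¹ • w‖ ^ 2 + ‖v + (2:ℝ)⁻¹ • w‖ ^ 2 = 2 * ‖v‖ ^ 2 + ‖w‖ ^ 2 / 2 := by
  rw [← real_inner_self_eq_norm_sq, ← real_inner_self_eq_norm_sq, ← real_inner_self_eq_norm_sq,
    ← real_inner_self_eq_norm_sq]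
  simp only [inner_sub_left, inner_sub_right, inner_add_left, inner_add_right,
    real_inner_smul_left, real_inner_smul_right, real_inner_comm v w]
  ring

set_option maxHeartbeats 1000000 in
/-- If `(p₁, p₂) ∈ L₁ × L₂` is the pair of points minimizing
`‖p₁ − p₂‖` between two lines with linearly independent unit directions, then
the unique global minimizer of `f(c) = dist(c, L₁)² + dist(c, L₂)²` is the
midpoint `(p₁ + p₂)/2`. -/
theorem midpoint_of_common_perpendicular_minimizes_sum_sq_dist
    (a₁ a₂ d₁ d₂ : EuclideanSpace ℝ (Fin 3))
    (hd₁ : ‖d₁‖ = 1) (hd₂ : ‖d₂‖ = 1)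
    (hind : LinearIndependent ℝ ![d₁, d₂])
    (L₁ L₂ : Set (EuclideanSpace ℝ (Fin 3)))
    (hL₁ : L₁ = {x | ∃ lam : ℝ, x = a₁ + lam • d₁})
    (hL₂ : L₂ = {x | ∃ lam : ℝ, x = a₂ + lam • d₂})
    (p₁ p₂ : EuclideanSpace ℝ (Fin 3))
    (hp₁ : p₁ ∈ L₁) (hp₂ : p₂ ∈ L₂)
    (hmin : ∀ q₁ ∈ L₁, ∀ q₂ ∈ L₂, ‖p₁ - p₂‖ ≤ ‖q₁ - q₂‖)
    (f : EuclideanSpace ℝ (Fin 3) → ℝ)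
    (hf : f = fun x => Metric.infDist x L₁ ^ 2 + Metric.infDist x L₂ ^ 2)
    (m : EuclideanSpace ℝ (Fin 3))
    (hm : m = (2 : ℝ)⁻¹ • (p₁ + p₂)) :
    (∀ x, f m ≤ f x) ∧ (∀ x, (∀ y, f x ≤ f y) → x = m) := by
  set w : EuclideanSpace ℝ (Fin 3) := p₁ - p₂ with hw
  obtain ⟨μ₁, hμ₁⟩ := hL₁ ▸ hp₁
  obtain ⟨μ₂, hμ₂⟩ := hL₂ ▸ hp₂
  -- rebase the lines at p₁, p₂
  have hL₁' : L₁ = {x | ∃ lam : ℝ, x = p₁ + lam • d₁} := by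
    rw [hL₁]; ext y
    constructor
    · rintro ⟨lam, rfl⟩; exact ⟨lam - μ₁, by rw [hμ₁]; module⟩
    · rintro ⟨lam, rfl⟩; exact ⟨μ₁ + lam, by rw [hμ₁]; module⟩
  have hL₂' : L₂ = {x | ∃ lam : ℝ, x = p₂ + lam • d₂} := by
    rw [hL₂]; ext y
    constructor
    · rintro ⟨lam, rfl⟩; exact ⟨lam - μ₂, by rw [hμ₂]; module⟩
    · rintro ⟨lam, rfl⟩; exact ⟨μ₂ + lam, by rw [hμ₂]; module⟩
  -- orthogonality of the common perpendicular
  have hw₁ : ⟪w, d₁⟫_ℝ = 0 := by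
    set t : ℝ := ⟪w, d₁⟫_ℝ with ht
    have hmem : p₁ + (-t) • d₁ ∈ L₁ := by rw [hL₁']; exact ⟨-t, rfl⟩
    have hkey := hmin (p₁ + (-t) • d₁) hmem p₂ (by assumption)
    have hrw : p₁ + (-t) • d₁ - p₂ = w - t • d₁ := by rw [hw]; module
    rw [hrw] at hkey
    have hsq := aux_norm_sub_smul_sq w d₁ hd₁ t
    nlinarith [norm_nonneg w, norm_nonneg (w - t • d₁)]
  have hw₂ : ⟪w, d₂⟫_ℝ = 0 := by
    set t : ℝ := ⟪w, d₂⟫_ℝ with ht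
    have hmem : p₂ + t • d₂ ∈ L₂ := by rw [hL₂']; exact ⟨t, rfl⟩
    have hkey := hmin p₁ (by assumption) (p₂ + t • d₂) hmem
    have hrw : p₁ - (p₂ + t • d₂) = w - t • d₂ := by rw [hw]; module
    rw [hrw] at hkey
    have hsq := aux_norm_sub_smul_sq w d₂ hd₂ t
    nlinarith [norm_nonneg w, norm_nonneg (w - t • d₂)]
  -- closed form for f
  have hfx : ∀ x, f x = 2 * ‖x - m‖ ^ 2 + ‖w‖ ^ 2 / 2
      - ⟪x - m, d₁⟫_ℝ ^ 2 - ⟪x - m, d₂⟫_ℝ ^ 2 := by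
    intro x
    have h1 : Metric.infDist x L₁ ^ 2 = ‖x - p₁‖ ^ 2 - ⟪x - p₁, d₁⟫_ℝ ^ 2 := by
      rw [hL₁']; exact aux_infDist_line_sq p₁ d₁ hd₁ x
    have h2 : Metric.infDist x L₂ ^ 2 = ‖x - p₂‖ ^ 2 - ⟪x - p₂, d₂⟫_ℝ ^ 2 := by
      rw [hL₂']; exact aux_infDist_line_sq p₂ d₂ hd₂ x
    have hx1 : x - p₁ = (x - m) - (2:ℝ)⁻¹ • w := by rw [hm, hw]; module
    have hx2 : x - p₂ = (x - m) + (2:ℝ)⁻¹ • w := by rw [hm, hw]; module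
    have hi1 : ⟪x - p₁, d₁⟫_ℝ = ⟪x - m, d₁⟫_ℝ := by
      rw [hx1, inner_sub_left, real_inner_smul_left, hw₁, mul_zero, sub_zero]
    have hi2 : ⟪x - p₂, d₂⟫_ℝ = ⟪x - m, d₂⟫_ℝ := by
      rw [hx2, inner_add_left, real_inner_smul_left, hw₂, mul_zero, add_zero]
    have hpar := aux_parallelogram (x - m) w
    rw [hf]
    simp only
    rw [h1, h2, hi1, hi2, hx1, hx2]
    linarith
  -- Cauchy–Schwarz bounds
  have hcs : ∀ (v d : EuclideanSpace ℝ (Fin 3)), ‖d‖ = 1 → ⟪v, d⟫_ℝ ^ 2 ≤ ‖v‖ ^ 2 := by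
    intro v d hd
    have := abs_real_inner_le_norm v d
    rw [hd, mul_one] at this
    nlinarith [abs_nonneg (⟪v, d⟫_ℝ), sq_abs (⟪v, d⟫_ℝ), norm_nonneg v]
  have hmval : f m = ‖w‖ ^ 2 / 2 := by
    rw [hfx m]; simp
  have part1 : ∀ x, f m ≤ f x := by
    intro x
    rw [hmval, hfx x]
    have := hcs (x - m) d₁ hd₁
    have := hcs (x - m) d₂ hd₂
    linarith
  refine ⟨part1, ?_⟩
  intro x hx
  have heq : f x = f m := le_antisymm (hx m) (part1 x)
  set v : EuclideanSpace ℝ (Fin 3) := x - m with hv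
  clear_value v
  have hc1 : ⟪v, d₁⟫_ℝ ^ 2 ≤ ‖v‖ ^ 2 := hcs v d₁ hd₁
  have hc2 : ⟪v, d₂⟫_ℝ ^ 2 ≤ ‖v‖ ^ 2 := hcs v d₂ hd₂
  have hsum : 2 * ‖v‖ ^ 2 - ⟪v, d₁⟫_ℝ ^ 2 - ⟪v, d₂⟫_ℝ ^ 2 = 0 := by
    have := hfx x
    rw [heq, hmval, ← hv] at this
    linarith
  have he1 : ‖v‖ ^ 2 = ⟪v, d₁⟫_ℝ ^ 2 := by linarith
  have he2 : ‖v‖ ^ 2 = ⟪v, d₂⟫_ℝ ^ 2 := by linarith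
  have hv1 : v = ⟪v, d₁⟫_ℝ • d₁ := by
    have h0 : ‖v - ⟪v, d₁⟫_ℝ • d₁‖ ^ 2 = 0 := by
      rw [aux_norm_sub_smul_sq v d₁ hd₁]; linarith
    exact sub_eq_zero.mp (norm_eq_zero.mp ((pow_eq_zero_iff two_ne_zero).mp h0))
  have hv2 : v = ⟪v, d₂⟫_ℝ • d₂ := by
    have h0 : ‖v - ⟪v, d₂⟫_ℝ • d₂‖ ^ 2 = 0 := by
      rw [aux_norm_sub_smul_sq v d₂ hd₂]; linarith
    exact sub_eq_zero.mp (norm_eq_zero.mp ((pow_eq_zero_iff two_ne_zero).mp h0))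
  have hlin : ⟪v, d₁⟫_ℝ • d₁ + (-⟪v, d₂⟫_ℝ) • d₂ = 0 := by
    rw [neg_smul, ← hv1, ← hv2]; simp
  obtain ⟨hz1, _⟩ := LinearIndependent.pair_iff.mp hind _ _ hlin
  have hvz : v = 0 := by rw [hv1, hz1, zero_smul]
  rw [hv] at hvz
  exact sub_eq_zero.mp hvz
end
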